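/- Let L be a frame. The order isomorphism F ↦ ⋂_{a∈F} 𝔬(a) between strongly exact filters (ordered by reverse inclusion) and fitted sublocales (ordered by inclusion) restricts to a pair of mutually inverse order isomorphisms between the set of exact filters of L and the set of sublocales of the form fit(⋁_{i∈I} (𝔠(x_i) ∩ 𝔬(y_i))) for families (x_i), (y_i) in L, i.e., fittings of smooth sublocales (joins of locally closed sublocales). -/
import Mathlib


/-- A filter of a frame: a nonempty, upward-closed subset closed under binary meets. -/
def IsFrameFilter {L : Type*} [Order.Frame L] (F : Set L) : Prop :=
  F.Nonempty ∧ (∀ x y : L, x ∈ F → x ≤ y → y ∈ F) ∧ (∀ x y : L, x ∈ F → y ∈ F → x ⊓ y ∈ F)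

/-- The open sublocale `𝔬(a) = {x | a → x = x}`. -/
def opn {L : Type*} [Order.Frame L] (a : L) : Set L := {x | a ⇨ x = x}

/-- The meet of `M` is strongly exact if `⋂_{m∈M} 𝔬(m) = 𝔬(⋀M)`. -/
def StronglyExactMeet {L : Type*} [Order.Frame L] (M : Set L) : Prop :=
  (⋂ m ∈ M, opn m) = opn (sInf M)

/-- The meet of `M` is exact if `(⋀M) ∨ b = ⋀_{m∈M}(m ∨ b)` for every `b`. -/
def ExactMeet {L : Type*} [Order.Frame L] (M : Set L) : Prop :=
  ∀ b : L, sInf M ⊔ b = ⨅ m ∈ M, (m ⊔ b)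

/-- A strongly exact filter. -/
def IsStronglyExactFilter {L : Type*} [Order.Frame L] (F : Set L) : Prop :=
  IsFrameFilter F ∧ ∀ M ⊆ F, StronglyExactMeet M → sInf M ∈ F

/-- An exact filter. -/
def IsExactFilter {L : Type*} [Order.Frame L] (F : Set L) : Prop :=
  IsFrameFilter F ∧ ∀ M ⊆ F, ExactMeet M → sInf M ∈ F

/-- A Scott-open filter. -/
def IsScottOpenFilter {L : Type*} [Order.Frame L] (F : Set L) : Prop :=
  IsFrameFilter F ∧
    ∀ D : Set L, D.Nonempty → DirectedOn (· ≤ ·) D → sSup D ∈ F → ∃ d ∈ D, d ∈ F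

/-- A completely prime filter: a proper filter such that `⋁A ∈ F` implies `a ∈ F`
for some `a ∈ A`. -/
def IsCompletelyPrimeFilter {L : Type*} [Order.Frame L] (F : Set L) : Prop :=
  IsFrameFilter F ∧ F ≠ Set.univ ∧ ∀ A : Set L, sSup A ∈ F → ∃ a ∈ A, a ∈ F

/-- The closed filter `𝔠f(a) = {x | x ∨ a = 1}`. -/
def closedFilter {L : Type*} [Order.Frame L] (a : L) : Set L := {x | x ⊔ a = ⊤}

/-- A regular filter: one of the form `{x | ∀ b ∈ F, x ∨ b = 1}` for some filter `F`. -/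
def IsRegularFilter {L : Type*} [Order.Frame L] (G : Set L) : Prop :=
  ∃ F : Set L, IsFrameFilter F ∧ G = {x : L | ∀ b ∈ F, x ⊔ b = ⊤}

/-- Subfitness of a frame. -/
def Subfit (L : Type*) [Order.Frame L] : Prop :=
  ∀ a b : L, (∀ c : L, a ⊔ c = ⊤ → b ⊔ c = ⊤) → a ≤ b

/-- A sublocale: a subset closed under all meets and under `a → (-)` for all `a`. -/
def IsSublocale {L : Type*} [Order.Frame L] (S : Set L) : Prop :=
  (∀ A ⊆ S, sInf A ∈ S) ∧ ∀ a : L, ∀ s ∈ S, (a ⇨ s) ∈ S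

/-- The fitting of a sublocale: intersection of the open sublocales above it. -/
def fitSl {L : Type*} [Order.Frame L] (S : Set L) : Set L :=
  ⋂ a ∈ {a : L | S ⊆ opn a}, opn a

/-- The sublocale `⋂_{a∈F} 𝔬(a)` associated to a filter `F`. -/
def fts {L : Type*} [Order.Frame L] (F : Set L) : Set L := ⋂ a ∈ F, opn a

/-- The filter `{a | S ⊆ 𝔬(a)}` associated to a sublocale `S`. -/
def stf {L : Type*} [Order.Frame L] (S : Set L) : Set L := {a : L | S ⊆ opn a}

section helpers
variable {L : Type*} [Order.Frame L]

lemma mem_opn_iff {a x : L} : x ∈ opn a ↔ a ⇨ x ≤ x :=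
  ⟨fun h => le_of_eq h, fun h => le_antisymm h le_himp⟩

lemma sInf_mem_opn {b : L} {A : Set L} (h : A ⊆ opn b) : sInf A ∈ opn b := by
  refine mem_opn_iff.2 (le_sInf fun x hx => ?_)
  calc b ⇨ sInf A ≤ b ⇨ x := himp_le_himp_left (sInf_le hx)
  _ = x := h hx

/-- Locally closed inside open iff `y ≤ b ⊔ x`. -/
lemma lc_subset_opn {x y b : L} : Set.Ici x ∩ opn y ⊆ opn b ↔ y ≤ b ⊔ x := by
  constructor
  · intro h
    have ht : y ⇨ (b ⊔ x) ∈ Set.Ici x ∩ opn y := by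
      constructor
      · exact le_trans le_sup_right le_himp
      · show y ⇨ (y ⇨ (b ⊔ x)) = y ⇨ (b ⊔ x)
        rw [himp_himp, inf_idem]
    have hb := h ht
    have htop : (⊤ : L) ≤ b ⇨ (y ⇨ (b ⊔ x)) :=
      le_himp_iff.2 (by simpa using le_trans le_sup_left le_himp)
    have : y ⇨ (b ⊔ x) = ⊤ := top_le_iff.1 (le_trans htop (le_of_eq hb))
    have : (⊤ : L) ⊓ y ≤ b ⊔ x := le_himp_iff.1 (le_of_eq this.symm)
    simpa using this
  · intro hy t ht
    obtain ⟨htx, hty⟩ := ht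
    refine mem_opn_iff.2 ?_
    have h1 : (b ⇨ t) ⊓ y ≤ t := by
      calc (b ⇨ t) ⊓ y ≤ (b ⇨ t) ⊓ (b ⊔ x) := inf_le_inf_left _ hy
      _ = (b ⇨ t) ⊓ b ⊔ (b ⇨ t) ⊓ x := inf_sup_left _ _ _
      _ ≤ t ⊔ t := sup_le_sup himp_inf_le (le_trans inf_le_right htx)
      _ = t := sup_idem t
    calc b ⇨ t ≤ y ⇨ t := le_himp_iff.2 h1
    _ = t := hty

lemma fts_subset_opn {F : Set L} {a : L} (ha : a ∈ F) : fts F ⊆ opn a := by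
  intro x hx
  simp only [fts, Set.mem_iInter] at hx
  exact hx a ha

lemma subset_fts_iff {S F : Set L} : S ⊆ fts F ↔ F ⊆ stf S := by
  constructor
  · intro h a ha
    exact fun x hx => fts_subset_opn ha (h hx)
  · intro h
    intro x hx
    simp only [fts, Set.mem_iInter]
    exact fun a ha => h ha hx

lemma subset_fts_stf (S : Set L) : S ⊆ fts (stf S) := subset_fts_iff.2 subset_rfl

lemma subset_stf_fts (F : Set L) : F ⊆ stf (fts F) := subset_fts_iff.1 subset_rfl

lemma fts_antitone {F G : Set L} (h : F ⊆ G) : fts G ⊆ fts F := by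
  intro x hx
  simp only [fts, Set.mem_iInter] at hx ⊢
  exact fun a ha => hx a (h ha)

lemma stf_antitone {S T : Set L} (h : S ⊆ T) : stf T ⊆ stf S :=
  fun a ha => Set.Subset.trans h ha

lemma stf_fts_stf (S : Set L) : stf (fts (stf S)) = stf S :=
  le_antisymm (stf_antitone (subset_fts_stf S)) (subset_stf_fts (stf S))

lemma fts_stf_fts (F : Set L) : fts (stf (fts F)) = fts F :=
  le_antisymm (fts_antitone (subset_stf_fts F)) (subset_fts_stf (fts F))

lemma fitSl_eq (S : Set L) : fitSl S = fts (stf S) := rfl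

/-- smooth sublocale generated by pairs. -/
def sm (P : Set (L × L)) : Set L :=
  {x : L | ∃ B ⊆ ⋃ p ∈ P, (Set.Ici p.1 ∩ opn p.2), x = sInf B}

/-- the filter of pairs. -/
def gp (P : Set (L × L)) : Set L := {b | ∀ p ∈ P, p.2 ≤ b ⊔ p.1}

lemma stf_sm (P : Set (L × L)) : stf (sm P) = gp P := by
  ext b
  constructor
  · intro h p hp
    refine lc_subset_opn.1 ?_
    intro t ht
    refine h ?_
    exact ⟨{t}, by simp only [Set.singleton_subset_iff, Set.mem_iUnion]; exact ⟨p, hp, ht⟩, (sInf_singleton).symm⟩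
  · intro h x hx
    obtain ⟨B, hB, rfl⟩ := hx
    refine sInf_mem_opn ?_
    intro y hy
    have := hB hy
    simp only [Set.mem_iUnion] at this
    obtain ⟨p, hp, hyp⟩ := this
    exact lc_subset_opn.2 (h p hp) hyp

lemma gp_exact (P : Set (L × L)) : IsExactFilter (gp P) := by
  constructor
  · refine ⟨⟨⊤, fun p _ => le_sup_of_le_left le_top⟩, ?_, ?_⟩
    · intro x y hx hxy p hp
      exact le_trans (hx p hp) (sup_le_sup_right hxy _)
    · intro x y hx hy p hp
      rw [sup_inf_right]
      exact le_inf (hx p hp) (hy p hp)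
  · intro M hM hMe p hp
    rw [hMe p.1]
    exact le_iInf₂ fun m hm => hM hm p hp

/-- the pairs associated to a filter. -/
def pairsOf (F : Set L) : Set (L × L) := {p | ∃ t : L, p = (t, ⨅ a ∈ F, (t ⊔ a))}

lemma gp_pairsOf {F : Set L} (hF : IsExactFilter F) : gp (pairsOf F) = F := by
  ext b
  constructor
  · intro h
    have h' : ∀ t : L, (⨅ a ∈ F, (t ⊔ a)) ≤ b ⊔ t := by
      intro t
      exact h (t, ⨅ a ∈ F, (t ⊔ a)) ⟨t, rfl⟩
    set M : Set L := (fun a => a ⊔ b) '' F with hMdef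
    have hMF : M ⊆ F := by
      rintro _ ⟨a, ha, rfl⟩
      exact hF.1.2.1 a (a ⊔ b) ha le_sup_left
    have hInfM : ∀ c : L, (⨅ m ∈ M, (m ⊔ c)) = ⨅ a ∈ F, (a ⊔ b ⊔ c) := by
      intro c
      rw [hMdef, iInf_image]
    have hMb : sInf M = b := by
      refine le_antisymm ?_ (le_sInf ?_)
      · rw [sInf_eq_iInf']
        calc (⨅ m : M, (m : L)) ≤ ⨅ a ∈ F, (b ⊔ a) := by
              refine le_iInf₂ fun a ha => iInf_le_of_le ⟨a ⊔ b, ⟨a, ha, rfl⟩⟩ (le_of_eq (sup_comm a b))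
        _ ≤ b ⊔ b := h' b
        _ = b := sup_idem b
      · rintro _ ⟨a, ha, rfl⟩
        exact le_sup_right
    have hMexact : ExactMeet M := by
      intro c
      rw [hMb, hInfM]
      refine le_antisymm (le_iInf₂ fun a ha => sup_le_sup_right le_sup_right c) ?_
      calc (⨅ a ∈ F, (a ⊔ b ⊔ c)) ≤ ⨅ a ∈ F, ((b ⊔ c) ⊔ a) := by
            refine le_iInf₂ fun a ha => iInf₂_le_of_le a ha ?_
            rw [sup_comm (b ⊔ c) a, sup_assoc]
      _ ≤ b ⊔ (b ⊔ c) := h' (b ⊔ c)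
      _ = b ⊔ c := by rw [← sup_assoc, sup_idem]
    have := hF.2 M hMF hMexact
    rwa [hMb] at this
  · intro hb p hp
    obtain ⟨t, rfl⟩ := hp
    calc (⨅ a ∈ F, (t ⊔ a)) ≤ t ⊔ b := iInf₂_le b hb
    _ = b ⊔ t := sup_comm t b

lemma exact_stf_sm {F : Set L} (hF : IsExactFilter F) : stf (sm (pairsOf F)) = F := by
  rw [stf_sm]; exact gp_pairsOf hF

end helpers
/-- The isomorphism `F ↦ ⋂_{a∈F} 𝔬(a)` between strongly exact filters (reverse inclusion)
and fitted sublocales (inclusion) restricts to a pair of mutually inverse order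
isomorphisms between exact filters and fittings of smooth sublocales, i.e. fittings of
joins of locally closed sublocales `𝔠(x) ∩ 𝔬(y)`. -/
theorem stmt17 {L : Type*} [Order.Frame L] :
    let FitSm : Set (Set L) :=
      {T | ∃ P : Set (L × L),
        T = fitSl {x : L | ∃ B ⊆ ⋃ p ∈ P, (Set.Ici p.1 ∩ opn p.2), x = sInf B}}
    (∀ F : Set L, IsExactFilter F → fts F ∈ FitSm) ∧
    (∀ T ∈ FitSm, IsExactFilter (stf T)) ∧
    (∀ F : Set L, IsExactFilter F → stf (fts F) = F) ∧
    (∀ T ∈ FitSm, fts (stf T) = T) ∧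
    (∀ F G : Set L, IsExactFilter F → IsExactFilter G →
      (G ⊆ F ↔ fts F ⊆ fts G)) := by
  intro FitSm
  have hmem : ∀ F : Set L, IsExactFilter F → fts F = fitSl (sm (pairsOf F)) := by
    intro F hF
    rw [fitSl_eq, exact_stf_sm hF]
  have key3 : ∀ F : Set L, IsExactFilter F → stf (fts F) = F := by
    intro F hF
    rw [hmem F hF, fitSl_eq, stf_fts_stf, exact_stf_sm hF]
  refine ⟨?_, ?_, key3, ?_, ?_⟩
  · intro F hF
    exact ⟨pairsOf F, hmem F hF⟩
  · rintro T ⟨P, rfl⟩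
    show IsExactFilter (stf (fitSl (sm P)))
    rw [fitSl_eq, stf_fts_stf, stf_sm]
    exact gp_exact P
  · rintro T ⟨P, rfl⟩
    show fts (stf (fitSl (sm P))) = fitSl (sm P)
    rw [fitSl_eq, fts_stf_fts]
  · intro F G hF hG
    constructor
    · exact fun h => fts_antitone h
    · intro h
      rw [← key3 G hG, ← key3 F hF]
      exact stf_antitone h
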